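/- Dual oscillation bound: let ν be a finite nonnegative Borel measure on R^d, Ω ⊂ B(z,ρ) with dist(Ω, supp(ν)) ≥ ερ, M ≥ 6, and let σ be a finite signed measure supported on Ω with σ(Ω) = 0. Then ∫_{R^d} |R(σ)| dν ≤ [ (2/(ερ)^s) ν(B(z, Mρ/3)) + (C/M) sup_{r>0} ν(B(z,r))/r^s ] · |σ|(Ω), where R(σ)(y) = ∫ (x−y)/|x−y|^{1+s} dσ(x) and C depends only on s and d. -/

import Mathlib

/-!
Write `σ = f τ`. Inside `B(z, Mρ/3)` the measure `ν` lives at distance `≥ ερ` from `Ω`, so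
there `|R(σ)(y)| ≤ (ερ)^{-s} |σ|(Ω)`. Farther out, the mean-zero condition lets us replace
`K(x - y)` by `K(x - y) - K(z - y)`, which is `O(ρ |y - z|^{-1-s})`. Integrating
`|y - z|^{-1-s}` against `ν` over the dyadic annuli `2ᵏR ≤ |y - z| < 2ᵏ⁺¹R` and using
`ν(B(z, r)) ≤ D rˢ` gives a geometric series with sum `2^{s+1} D / R`.
-/

open MeasureTheory Metric Set
open scoped ENNReal

/-- The fractional Riesz kernel `K(w) = w / |w|^{1+s}`. -/
noncomputable def rieszKernel (d : ℕ) (s : ℝ) (w : EuclideanSpace ℝ (Fin d)) :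
    EuclideanSpace ℝ (Fin d) :=
  (‖w‖ ^ (1 + s))⁻¹ • w

/-- The support of a measure. -/
def measSupport (d : ℕ) (μ : Measure (EuclideanSpace ℝ (Fin d))) :
    Set (EuclideanSpace ℝ (Fin d)) :=
  {x | ∀ ε : ℝ, 0 < ε → 0 < μ (ball x ε)}

lemma measSupport_eq_support (d : ℕ) (ν : Measure (EuclideanSpace ℝ (Fin d))) :
    measSupport d ν = ν.support := by
  ext x
  exact nhds_basis_ball.mem_measureSupport.symm

lemma ae_mem_measSupport (d : ℕ) (ν : Measure (EuclideanSpace ℝ (Fin d))) :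
    ∀ᵐ y ∂ν, y ∈ measSupport d ν := by
  rw [measSupport_eq_support]
  exact Measure.support_mem_ae

lemma integral_le_mul_measureReal_add_setIntegral_compl {X : Type*} [MeasurableSpace X]
    {ν : Measure X} [IsFiniteMeasure ν] {F h : X → ℝ} {B : Set X} (hB : MeasurableSet B)
    {a : ℝ}
    (hF : ∀ᵐ y ∂ν, 0 ≤ F y) (hFB : ∀ᵐ y ∂ν, y ∈ B → F y ≤ a)
    (hFBc : ∀ᵐ y ∂ν, y ∉ B → F y ≤ h y) (hh : IntegrableOn h Bᶜ ν) :
    ∫ y, F y ∂ν ≤ a * ν.real B + ∫ y in Bᶜ, h y ∂ν := by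
  classical
  have hconst : IntegrableOn (fun _ => a) B ν := integrableOn_const (measure_ne_top _ _)
  calc ∫ y, F y ∂ν ≤ ∫ y, B.piecewise (fun _ => a) h y ∂ν := by
        refine integral_mono_of_nonneg hF (Integrable.piecewise hB hconst hh) ?_
        filter_upwards [hFB, hFBc] with y hyB hyBc
        by_cases hy : y ∈ B
        · simpa [hy] using hyB hy
        · simpa [hy] using hyBc hy
    _ = a * ν.real B + ∫ y in Bᶜ, h y ∂ν := by
        rw [integral_piecewise hB hconst hh, setIntegral_const, smul_eq_mul, mul_comm]

lemma abs_rpow_neg_sub_rpow_neg_le {p m t u : ℝ} (hp : 0 < p) (hm : 0 < m) (ht : m ≤ t)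
    (hu : m ≤ u) : |t ^ (-p) - u ^ (-p)| ≤ p * m ^ (-(p + 1)) * |t - u| := by
  have hderiv_le : ∀ x ∈ Ici m, ‖-p * x ^ (-p - 1)‖ ≤ p * m ^ (-(p + 1)) := by
    intro x hx
    rw [Real.norm_eq_abs, abs_mul, abs_neg, abs_of_pos hp,
      abs_of_nonneg (Real.rpow_nonneg (hm.le.trans hx) _), neg_add']
    exact mul_le_mul_of_nonneg_left (Real.rpow_le_rpow_of_nonpos hm hx (by linarith)) hp.le
  simpa [Real.norm_eq_abs] using Convex.norm_image_sub_le_of_norm_hasDerivWithin_le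
    (fun x hx => (Real.hasDerivAt_rpow_const
      (Or.inl (hm.trans_le hx).ne')).hasDerivWithinAt) hderiv_le (convex_Ici m) hu ht

lemma norm_rpow_neg_smul_sub_le {E : Type*} [NormedAddCommGroup E] [NormedSpace ℝ E] {p : ℝ}
    (hp : 0 < p) {a b : E} (hb : 0 < ‖b‖) (hab : ‖a - b‖ ≤ ‖b‖ / 2) :
    ‖‖a‖ ^ (-p) • a - ‖b‖ ^ (-p) • b‖ ≤
      (2 ^ p + p * 2 ^ (p + 1)) * ‖b‖ ^ (-p) * ‖a - b‖ := by
  set m := ‖b‖ / 2 with hm_def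
  have hm : 0 < m := by positivity
  have ha : m ≤ ‖a‖ := by linarith [norm_sub_norm_le b a, norm_sub_rev a b]
  have hbm : m ≤ ‖b‖ := by linarith
  have hm_rpow : ∀ q : ℝ, m ^ (-q) = 2 ^ q * ‖b‖ ^ (-q) := fun q => by
    rw [Real.div_rpow hb.le zero_le_two, Real.rpow_neg zero_le_two, div_inv_eq_mul, mul_comm]
  have hm_rpow_succ : m ^ (-(p + 1)) * ‖b‖ = 2 ^ (p + 1) * ‖b‖ ^ (-p) := by
    rw [hm_rpow, mul_assoc, Real.rpow_neg hb.le, Real.rpow_add_one hb.ne', Real.rpow_neg hb.le,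
      mul_inv, mul_assoc, inv_mul_cancel₀ hb.ne', mul_one]
  have hsplit : ‖a‖ ^ (-p) • a - ‖b‖ ^ (-p) • b
      = ‖a‖ ^ (-p) • (a - b) + (‖a‖ ^ (-p) - ‖b‖ ^ (-p)) • b := by
    rw [smul_sub, sub_smul]
    abel
  have hradial : |‖a‖ ^ (-p) - ‖b‖ ^ (-p)| ≤ p * m ^ (-(p + 1)) * ‖a - b‖ :=
    (abs_rpow_neg_sub_rpow_neg_le hp hm ha hbm).trans
      (mul_le_mul_of_nonneg_left (abs_norm_sub_norm_le a b) (by positivity))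
  calc ‖‖a‖ ^ (-p) • a - ‖b‖ ^ (-p) • b‖
      ≤ ‖a‖ ^ (-p) * ‖a - b‖ + |‖a‖ ^ (-p) - ‖b‖ ^ (-p)| * ‖b‖ := by
        rw [hsplit]
        refine (norm_add_le _ _).trans_eq ?_
        rw [norm_smul, norm_smul, Real.norm_eq_abs, Real.norm_eq_abs,
          abs_of_nonneg (Real.rpow_nonneg (norm_nonneg a) _)]
    _ ≤ m ^ (-p) * ‖a - b‖ + p * m ^ (-(p + 1)) * ‖a - b‖ * ‖b‖ := by
        have ha_rpow := Real.rpow_le_rpow_of_nonpos hm ha (neg_nonpos.2 hp.le)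
        gcongr
    _ = (2 ^ p + p * 2 ^ (p + 1)) * ‖b‖ ^ (-p) * ‖a - b‖ := by
        rw [hm_rpow, mul_right_comm _ ‖a - b‖, mul_assoc p, hm_rpow_succ]
        ring

section RieszKernel

variable {d : ℕ} {s : ℝ}

lemma rieszKernel_eq_rpow_neg_smul (w : EuclideanSpace ℝ (Fin d)) :
    rieszKernel d s w = ‖w‖ ^ (-(1 + s)) • w := by
  rw [rieszKernel, Real.rpow_neg (norm_nonneg w)]

lemma norm_rieszKernel {w : EuclideanSpace ℝ (Fin d)} (hw : w ≠ 0) :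
    ‖rieszKernel d s w‖ = ‖w‖ ^ (-s) := by
  have hw0 : 0 < ‖w‖ := norm_pos_iff.2 hw
  rw [rieszKernel_eq_rpow_neg_smul, norm_smul, Real.norm_of_nonneg (by positivity),
    show -s = -(1 + s) + 1 by ring, Real.rpow_add hw0, Real.rpow_one]

lemma norm_rieszKernel_le (hs : 0 ≤ s) {c : ℝ} (hc : 0 < c) {w : EuclideanSpace ℝ (Fin d)}
    (hw : c ≤ ‖w‖) : ‖rieszKernel d s w‖ ≤ c ^ (-s) := by
  rw [norm_rieszKernel (norm_pos_iff.1 (hc.trans_le hw))]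
  exact Real.rpow_le_rpow_of_nonpos hc hw (neg_nonpos.2 hs)

lemma norm_rieszKernel_sub_le (hs : -1 < s) {a b : EuclideanSpace ℝ (Fin d)} (hb : 0 < ‖b‖)
    (hab : ‖a - b‖ ≤ ‖b‖ / 2) :
    ‖rieszKernel d s a - rieszKernel d s b‖ ≤
      (2 ^ (1 + s) + (1 + s) * 2 ^ (1 + s + 1)) * ‖b‖ ^ (-(1 + s)) * ‖a - b‖ := by
  simp only [rieszKernel_eq_rpow_neg_smul]
  exact norm_rpow_neg_smul_sub_le (by linarith) hb hab

lemma measurable_rieszKernel : Measurable (rieszKernel d s) := by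
  unfold rieszKernel
  fun_prop

end RieszKernel

/-- The Riesz transform `R(σ)(y) = ∫ K(x - y) dσ(x)` of the signed measure `σ = f τ`. -/
noncomputable def rieszTransform (d : ℕ) (s : ℝ) (τ : Measure (EuclideanSpace ℝ (Fin d)))
    (f : EuclideanSpace ℝ (Fin d) → ℝ) (y : EuclideanSpace ℝ (Fin d)) :
    EuclideanSpace ℝ (Fin d) :=
  ∫ x, f x • rieszKernel d s (x - y) ∂τ

section RieszTransform

variable {d : ℕ} {s : ℝ} {τ : Measure (EuclideanSpace ℝ (Fin d))}
  {f : EuclideanSpace ℝ (Fin d) → ℝ}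

lemma norm_rieszTransform_le_of_le_dist (hs : 0 ≤ s) (hf : Integrable f τ)
    {y : EuclideanSpace ℝ (Fin d)} {c : ℝ} (hc : 0 < c)
    (hsep : ∀ᵐ x ∂τ, c ≤ dist x y) :
    ‖rieszTransform d s τ f y‖ ≤ c ^ (-s) * ∫ x, |f x| ∂τ := by
  rw [rieszTransform, ← integral_const_mul]
  refine norm_integral_le_of_norm_le (hf.abs.const_mul _) ?_
  filter_upwards [hsep] with x hx
  rw [norm_smul, Real.norm_eq_abs, mul_comm]
  exact mul_le_mul_of_nonneg_right (norm_rieszKernel_le hs hc (dist_eq_norm x y ▸ hx))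
    (abs_nonneg _)

lemma norm_rieszTransform_le_of_integral_eq_zero (hs : -1 < s) (hf : Integrable f τ)
    (hmean : ∫ x, f x ∂τ = 0) {z y : EuclideanSpace ℝ (Fin d)} {ρ : ℝ} (hρ : 0 < ρ)
    (hτ : ∀ᵐ x ∂τ, dist x z ≤ ρ) (hy : 2 * ρ ≤ dist y z) :
    ‖rieszTransform d s τ f y‖ ≤
      (2 ^ (1 + s) + (1 + s) * 2 ^ (1 + s + 1)) * ρ * dist y z ^ (-(1 + s)) *
        ∫ x, |f x| ∂τ := by
  set C := (2 ^ (1 + s) + (1 + s) * 2 ^ (1 + s + 1)) * ρ * dist y z ^ (-(1 + s))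
  set osc := fun x => f x • (rieszKernel d s (x - y) - rieszKernel d s (z - y))
  have hzy : ‖z - y‖ = dist y z := by rw [← dist_eq_norm, dist_comm]
  have hosc : ∀ᵐ x ∂τ, ‖osc x‖ ≤ C * |f x| := by
    filter_upwards [hτ] with x hx
    have hxz : ‖(x - y) - (z - y)‖ = dist x z := by rw [sub_sub_sub_cancel_right, dist_eq_norm]
    have hkernel := norm_rieszKernel_sub_le hs (a := x - y) (b := z - y) (by rw [hzy]; linarith)
      (by rw [hxz, hzy]; linarith)
    rw [hzy, hxz] at hkernel
    rw [norm_smul, Real.norm_eq_abs, mul_comm]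
    gcongr
    refine hkernel.trans ?_
    rw [mul_right_comm]
    have hC₀ : (0 : ℝ) ≤ 2 ^ (1 + s) + (1 + s) * 2 ^ (1 + s + 1) :=
      add_nonneg (by positivity) (mul_nonneg (by linarith) (by positivity))
    exact mul_le_mul_of_nonneg_right (mul_le_mul_of_nonneg_left hx hC₀)
      (Real.rpow_nonneg dist_nonneg _)
  have hosc_int : Integrable osc τ :=
    (hf.abs.const_mul C).mono' (hf.aestronglyMeasurable.smul
      ((measurable_rieszKernel.comp (measurable_id.sub_const y)).sub_const
        _).aestronglyMeasurable) hosc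
  -- The mean-zero condition lets us subtract the kernel frozen at the centre `z`.
  have hcancel : rieszTransform d s τ f y = ∫ x, osc x ∂τ := by
    have hsplit : (fun x => f x • rieszKernel d s (x - y))
        = fun x => osc x + f x • rieszKernel d s (z - y) := by
      ext1 x
      simp only [osc, smul_sub, sub_add_cancel]
    rw [rieszTransform, hsplit, integral_add hosc_int (hf.smul_const _), integral_smul_const,
      hmean, zero_smul, add_zero]
  rw [hcancel, ← integral_const_mul]
  exact norm_integral_le_of_norm_le (hf.abs.const_mul C) hosc

end RieszTransform

section DyadicAnnuli

variable {X : Type*} [PseudoMetricSpace X]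

def dyadicAnnulus (z : X) (R : ℝ) (k : ℕ) : Set X :=
  (dist · z) ⁻¹' Ico (2 ^ k * R) (2 ^ (k + 1) * R)

variable {z : X} {R : ℝ}

lemma pairwise_disjoint_dyadicAnnulus (hR : 0 < R) :
    Pairwise (Function.onFun Disjoint (dyadicAnnulus z R)) := by
  have hmono : Monotone fun k : ℕ => (2 : ℝ) ^ k * R := fun _ _ hkl =>
    mul_le_mul_of_nonneg_right (pow_le_pow_right₀ one_le_two hkl) hR.le
  exact hmono.pairwise_disjoint_on_Ico_succ.mono fun k l h => h.preimage _

lemma iUnion_dyadicAnnulus (hR : 0 < R) : ⋃ k, dyadicAnnulus z R k = (ball z R)ᶜ := by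
  have hunbounded : ¬BddAbove (range fun k : ℕ => (2 : ℝ) ^ k * R) := by
    rintro ⟨b, hb⟩
    obtain ⟨k, hk⟩ := pow_unbounded_of_one_lt (b / R) one_lt_two
    exact (div_lt_iff₀ hR).1 hk |>.not_ge (hb ⟨k, rfl⟩)
  have hIci := iUnion_Ico_map_succ_eq_Ici (f := fun k : ℕ => (2 : ℝ) ^ k * R)
    (fun k => mul_le_mul_of_nonneg_right (one_le_pow₀ one_le_two) hR.le) hunbounded
  simp only [Order.succ_eq_add_one, Nat.bot_eq_zero, pow_zero, one_mul] at hIci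
  ext y
  simp [dyadicAnnulus, ← preimage_iUnion, hIci]

variable [MeasurableSpace X] {ν : Measure X} [IsFiniteMeasure ν] {s D : ℝ}

lemma setIntegral_dyadicAnnulus_dist_rpow_neg_le (hs : -1 ≤ s) (hR : 0 < R)
    (hgrowth : ∀ r : ℝ, 0 < r → (ν (ball z r)).toReal ≤ D * r ^ s) (k : ℕ) :
    ∫ y in dyadicAnnulus z R k, dist y z ^ (-(1 + s)) ∂ν ≤ 2 ^ s * D / R * (1 / 2) ^ k := by
  set u : ℝ := 2 ^ k * R
  have hu : 0 < u := by positivity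
  have hbound : ∀ y ∈ dyadicAnnulus z R k, ‖dist y z ^ (-(1 + s))‖ ≤ u ^ (-(1 + s)) := by
    intro y hy
    rw [Real.norm_of_nonneg (Real.rpow_nonneg dist_nonneg _)]
    exact Real.rpow_le_rpow_of_nonpos hu hy.1 (by linarith)
  have hmass : ν.real (dyadicAnnulus z R k) ≤ D * (2 * u) ^ s := by
    refine (measureReal_mono fun y hy => ?_).trans (hgrowth (2 * u) (by positivity))
    rw [mem_ball, ← mul_assoc, ← pow_succ']
    exact hy.2
  calc ∫ y in dyadicAnnulus z R k, dist y z ^ (-(1 + s)) ∂ν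
      ≤ u ^ (-(1 + s)) * ν.real (dyadicAnnulus z R k) :=
        (Real.le_norm_self _).trans
          (norm_setIntegral_le_of_norm_le_const (measure_lt_top _ _) hbound)
    _ ≤ u ^ (-(1 + s)) * (D * (2 * u) ^ s) := by gcongr
    _ = 2 ^ s * D / R * (1 / 2) ^ k := by
        rw [Real.mul_rpow zero_le_two hu.le, show -(1 + s) = -1 + -s by ring,
          Real.rpow_add hu, Real.rpow_neg hu.le s, Real.rpow_neg_one]
        simp only [u, div_pow, one_pow]
        field_simp

variable [OpensMeasurableSpace X]

lemma measurableSet_dyadicAnnulus (k : ℕ) : MeasurableSet (dyadicAnnulus z R k) :=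
  measurableSet_Ico.preimage (continuous_id.dist continuous_const).measurable

lemma integrableOn_dist_rpow_neg_compl_ball {t : ℝ} (ht : 0 ≤ t) (hR : 0 < R) :
    IntegrableOn (fun y => dist y z ^ (-t)) (ball z R)ᶜ ν := by
  refine Measure.integrableOn_of_bounded (M := R ^ (-t)) (measure_ne_top _ _)
    ((continuous_id.dist continuous_const).measurable.pow_const _).aestronglyMeasurable ?_
  rw [ae_restrict_iff' measurableSet_ball.compl]
  refine ae_of_all _ fun y hy => ?_
  rw [Real.norm_of_nonneg (Real.rpow_nonneg dist_nonneg _)]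
  exact Real.rpow_le_rpow_of_nonpos hR (not_lt.1 hy) (neg_nonpos.2 ht)

lemma setIntegral_compl_ball_dist_rpow_neg_le (hs : -1 ≤ s) (hR : 0 < R)
    (hgrowth : ∀ r : ℝ, 0 < r → (ν (ball z r)).toReal ≤ D * r ^ s) :
    ∫ y in (ball z R)ᶜ, dist y z ^ (-(1 + s)) ∂ν ≤ 2 ^ (s + 1) * D / R := by
  have hsum := hasSum_integral_iUnion (μ := ν) (f := fun y => dist y z ^ (-(1 + s)))
    measurableSet_dyadicAnnulus (pairwise_disjoint_dyadicAnnulus hR) (by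
      rw [iUnion_dyadicAnnulus hR]
      exact integrableOn_dist_rpow_neg_compl_ball (by linarith) hR)
  rw [iUnion_dyadicAnnulus hR] at hsum
  have hgeom := hasSum_geometric_two.mul_left (2 ^ s * D / R)
  rw [show 2 ^ s * D / R * 2 = 2 ^ (s + 1) * D / R by rw [Real.rpow_add_one two_ne_zero]; ring]
    at hgeom
  exact hasSum_le (setIntegral_dyadicAnnulus_dist_rpow_neg_le hs hR hgrowth) hsum hgeom

end DyadicAnnuli

/-- Dual oscillation bound: if `σ = f dτ` is a signed measure supported on
`Ω ⊆ B(z,ρ)` with total mass zero, and `ν` is a nonnegative measure at distance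
at least `ερ` from `Ω`, then
`∫ |R(σ)| dν ≤ [(2/(ερ)^s) ν(B(z,Mρ/3)) + (C/M) sup_{r>0} ν(B(z,r))/r^s] |σ|(Ω)`. -/
theorem riesz_dual_oscillation_lemma
    (d : ℕ) (hd : 2 ≤ d) (s : ℝ) (hs : s ∈ Set.Ioo ((d : ℝ) - 1) d) :
    ∃ C : ℝ, 0 < C ∧
      ∀ (ν τ : Measure (EuclideanSpace ℝ (Fin d))),
        IsFiniteMeasure ν → IsFiniteMeasure τ →
      ∀ (f : EuclideanSpace ℝ (Fin d) → ℝ), Integrable f τ →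
      ∀ (z : EuclideanSpace ℝ (Fin d)) (ρ ε M : ℝ)
        (Ω : Set (EuclideanSpace ℝ (Fin d))),
        0 < ρ → ε ∈ Set.Ioo (0 : ℝ) 1 → 6 ≤ M → Ω ⊆ ball z ρ →
        τ Ωᶜ = 0 → (∫ x, f x ∂τ) = 0 →
        (∀ w ∈ Ω, ∀ y ∈ measSupport d ν, ε * ρ ≤ dist w y) →
        ∀ D : ℝ, 0 ≤ D → (∀ r : ℝ, 0 < r → (ν (ball z r)).toReal ≤ D * r ^ s) →
        (∫ y, ‖∫ x, f x • rieszKernel d s (x - y) ∂τ‖ ∂ν) ≤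
          (2 / (ε * ρ) ^ s * (ν (ball z (M * ρ / 3))).toReal + C / M * D) *
            ∫ x, |f x| ∂τ := by
  have hs0 : 0 < s := by
    have : (2 : ℝ) ≤ d := by exact_mod_cast hd
    linarith [hs.1]
  set C₀ : ℝ := 2 ^ (1 + s) + (1 + s) * 2 ^ (1 + s + 1)
  refine ⟨3 * 2 ^ (s + 1) * C₀, by positivity, ?_⟩
  intro ν τ _ _ f hf z ρ ε M Ω hρ hε hM hΩ hτΩ hmean hsep D _ hgrowth
  set R := M * ρ / 3
  set F := ∫ x, |f x| ∂τ
  have hερ : 0 < ε * ρ := mul_pos hε.1 hρ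
  have hR2 : 2 * ρ ≤ R := by simp only [R]; nlinarith
  have hτΩ' : ∀ᵐ x ∂τ, x ∈ Ω := ae_iff.2 hτΩ
  have hnear : ∀ᵐ y ∂ν, y ∈ ball z R →
      ‖rieszTransform d s τ f y‖ ≤ (ε * ρ) ^ (-s) * F := by
    filter_upwards [ae_mem_measSupport d ν] with y hy _
    exact norm_rieszTransform_le_of_le_dist hs0.le hf hερ
      (hτΩ'.mono fun x hx => hsep x hx y hy)
  have hfar : ∀ᵐ y ∂ν, y ∉ ball z R →
      ‖rieszTransform d s τ f y‖ ≤ C₀ * ρ * F * dist y z ^ (-(1 + s)) := by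
    refine ae_of_all _ fun y hy => ?_
    rw [mul_right_comm]
    exact norm_rieszTransform_le_of_integral_eq_zero (by linarith) hf hmean hρ
      (hτΩ'.mono fun x hx => (mem_ball.1 (hΩ hx)).le) (hR2.trans (not_lt.1 (mt mem_ball.2 hy)))
  have hfirst : (ε * ρ) ^ (-s) ≤ 2 / (ε * ρ) ^ s := by
    rw [Real.rpow_neg hερ.le, inv_eq_one_div]
    gcongr
    norm_num
  calc ∫ y, ‖rieszTransform d s τ f y‖ ∂ν
      ≤ (ε * ρ) ^ (-s) * F * ν.real (ball z R)
        + ∫ y in (ball z R)ᶜ, C₀ * ρ * F * dist y z ^ (-(1 + s)) ∂ν :=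
        integral_le_mul_measureReal_add_setIntegral_compl measurableSet_ball
          (ae_of_all _ fun _ => norm_nonneg _) hnear hfar
          ((integrableOn_dist_rpow_neg_compl_ball (by linarith) (by linarith)).const_mul _)
    _ ≤ 2 / (ε * ρ) ^ s * F * ν.real (ball z R) + C₀ * ρ * F * (2 ^ (s + 1) * D / R) := by
        rw [integral_const_mul]
        gcongr
        exact setIntegral_compl_ball_dist_rpow_neg_le (by linarith) (by linarith) hgrowth
    _ = (2 / (ε * ρ) ^ s * ν.real (ball z R) + 3 * 2 ^ (s + 1) * C₀ / M * D) * F := by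
        simp only [R]
        field_simp
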